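/- arXiv:1006.5479 — 5 statements merged into one kernel-verified Lean document; each statement's English description precedes it below -/
import Mathlib

section
/- Let K be a group and φ : K × K → ℂˣ a normalized 2-cocycle. Then for all k, k', l ∈ K: φ(l, k)·φ(lk, l⁻¹)·φ(l, k')·φ(lk', l⁻¹)·φ(lkl⁻¹, lk'l⁻¹) = φ(k, k')·φ(l, kk')·φ(lkk', l⁻¹). -/
/-!
Write `c_l(k) = φ(l,k)·φ(lk,l⁻¹)`; in the twisted group algebra `δ_l δ_k δ_{l⁻¹} = c_l(k) δ_{lkl⁻¹}`,
so the identity says that conjugating by `l` changes `φ` by the coboundary of `c_l`. Directly, it is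
the cocycle relation at `(l,k,k')`, `(lkl⁻¹,l,k')` and `(lkl⁻¹,lk',l⁻¹)`, together with
`φ(lkl⁻¹,l)·φ(lk,l⁻¹) = 1`, which is the relation at `(lk,l⁻¹,l)` for a normalized cocycle.
-/

/-- `φ : K × K → ℂˣ` is a 2-cocycle: `φ(kl, m)·φ(k, l) = φ(k, lm)·φ(l, m)`. -/
def IsTwoCocycle {K : Type*} [Group K] (φ : K → K → ℂˣ) : Prop :=
  ∀ k l m : K, φ (k * l) m * φ k l = φ k (l * m) * φ l m

/-- `φ` is normalized: `φ(e,k) = φ(k,e) = 1`, `φ(k,k⁻¹) = 1`, `|φ(k,l)| = 1` and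
`φ(k⁻¹,l⁻¹) = φ(l,k)⁻¹`. -/
def IsNormalizedCocycle {K : Type*} [Group K] (φ : K → K → ℂˣ) : Prop :=
  (∀ k : K, φ 1 k = 1 ∧ φ k 1 = 1) ∧
  (∀ k : K, φ k k⁻¹ = 1) ∧
  (∀ k l : K, ‖((φ k l : ℂˣ) : ℂ)‖ = 1) ∧
  (∀ k l : K, φ k⁻¹ l⁻¹ = (φ l k)⁻¹)

section CommGroup

variable {K M : Type*} [Group K] [CommGroup M] {φ : K → K → M}

def conjFactor (φ : K → K → M) (l k : K) : M :=
  φ l k * φ (l * k) l⁻¹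

theorem cocycle_mul_inv_mul_eq_one
    (hφ : ∀ k l m : K, φ (k * l) m * φ k l = φ k (l * m) * φ l m) {g l : K}
    (hg : φ g 1 = 1) (hl : φ l⁻¹ l = 1) :
    φ (g * l⁻¹) l * φ g l⁻¹ = 1 := by
  have h := hφ g l⁻¹ l
  rwa [inv_mul_cancel, hg, hl, one_mul] at h

theorem conjFactor_mul_conjFactor
    (hφ : ∀ k l m : K, φ (k * l) m * φ k l = φ k (l * m) * φ l m) {k k' l : K}
    (hlk : φ (l * k) 1 = 1) (hl : φ l⁻¹ l = 1) :
    conjFactor φ l k * conjFactor φ l k' * φ (l * k * l⁻¹) (l * k' * l⁻¹)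
      = φ k k' * conjFactor φ l (k * k') := by
  have ha : l * k * l⁻¹ * l = l * k := by group
  have ha' : l * k * l⁻¹ * (l * k') = l * (k * k') := by group
  set a := l * k * l⁻¹
  have hal : φ a l * φ (l * k) l⁻¹ = 1 := cocycle_mul_inv_mul_eq_one hφ hlk hl
  have e₁ := hφ a l k'
  have e₂ := hφ a (l * k') l⁻¹
  have e₃ := hφ l k k'
  rw [ha] at e₁
  rw [ha', mul_assoc l k' l⁻¹] at e₂
  rw [conjFactor, conjFactor, conjFactor, mul_assoc l k' l⁻¹]
  calc φ l k * φ (l * k) l⁻¹ * (φ l k' * φ (l * k') l⁻¹) * φ a (l * (k' * l⁻¹))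
      = φ l k * φ (l * k) l⁻¹ * φ l k' * (φ (l * (k * k')) l⁻¹ * φ a (l * k')) := by
        rw [e₂]; ac_rfl
    _ = φ l k * φ (l * k) l⁻¹ * φ (l * (k * k')) l⁻¹ * (φ (l * k) k' * φ a l) := by
        rw [e₁]; ac_rfl
    _ = φ (l * (k * k')) l⁻¹ * (φ (l * k) k' * φ l k) * (φ a l * φ (l * k) l⁻¹) := by
        ac_rfl
    _ = φ k k' * (φ l (k * k') * φ (l * (k * k')) l⁻¹) := by
        rw [hal, e₃, mul_one]; ac_rfl

end CommGroup

theorem normalized_cocycle_identity_3 (K : Type*) [Group K] (φ : K → K → ℂˣ)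
    (hφ : IsTwoCocycle φ) (hn : IsNormalizedCocycle φ) (k k' l : K) :
    φ l k * φ (l * k) l⁻¹ * φ l k' * φ (l * k') l⁻¹ * φ (l * k * l⁻¹) (l * k' * l⁻¹)
      = φ k k' * φ l (k * k') * φ (l * k * k') l⁻¹ := by
  have hl : φ l⁻¹ l = 1 := by simpa using hn.2.1 l⁻¹
  simpa only [conjFactor, mul_assoc] using
    conjFactor_mul_conjFactor hφ (hn.1 (l * k)).2 hl
end

section
/- Let K be a group and let φ, φ' : K × K → ℂˣ be equivalent 2-cocycles. Then for all commuting elements k, l ∈ K (i.e., kl = lk): φ'(k,l)·φ'(l,k)⁻¹ = φ(k,l)·φ(l,k)⁻¹. In other words, the quantity φ(k|l) := φ(k,l)·φ(klk⁻¹,k)⁻¹ on commuting pairs depends only on the equivalence class of the 2-cocycle. -/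
/-- Two 2-cocycles are equivalent if they differ by a coboundary
`φ'(k,l) = α(kl)⁻¹·α(k)·α(l)·φ(k,l)`. -/
def CocycleEquiv {K : Type*} [Group K] (φ φ' : K → K → ℂˣ) : Prop :=
  ∃ α : K → ℂˣ, ∀ k l : K, φ' k l = (α (k * l))⁻¹ * α k * α l * φ k l

/-- For commuting `k, l`, the quantity `φ(k,l)·φ(l,k)⁻¹` depends only on the equivalence
class of the 2-cocycle `φ`. -/
theorem cocycle_commutator_invariant (K : Type*) [Group K] (φ φ' : K → K → ℂˣ)
    (hφ : IsTwoCocycle φ) (hφ' : IsTwoCocycle φ') (h : CocycleEquiv φ φ') :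
    ∀ k l : K, k * l = l * k → φ' k l * (φ' l k)⁻¹ = φ k l * (φ l k)⁻¹ := by
  obtain ⟨α, hα⟩ := h
  intro k l hkl
  have : ∀ a b c d e f : ℂˣ, a⁻¹ * b * c * d * (a⁻¹ * c * b * e)⁻¹ = d * e⁻¹ := by
    intro a b c d e f
    ext
    push_cast
    field_simp
  rw [hα k l, hα l k, hkl, this _ _ _ _ _ 1]
end

section
/- Let q be a prime power of characteristic p, G_q = F_q⁺ ⋊ F_q^×, ω ∈ ℂ a primitive p-th root of unity, and tr_p : F_q → F_p the field trace. Let U = {((a₁, α), (a₂, α⁻¹)) : a₁, a₂ ∈ F_q, α ∈ F_q^×} ⊆ G_q × G_q, and define φ : U × U → ℂˣ by φ(g, h) = ω^{tr_p(α·a₂·b₁)} for g = ((a₁, α), (a₂, α⁻¹)) and h = ((b₁, β), (b₂, β⁻¹)). Then U is a subgroup of G_q × G_q and φ is a 2-cocycle on U, i.e., φ(gh, m)·φ(g, h) = φ(g, hm)·φ(h, m) for all g, h, m ∈ U. -/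
/-- The action of `Fˣ` on the (multiplicative version of the) additive group of `F`
by multiplication, as a homomorphism into the automorphism group. -/
def fieldAct (F : Type*) [Field F] : Fˣ →* MulAut (Multiplicative F) where
  toFun u := AddEquiv.toMultiplicative (DistribMulAction.toAddAut Fˣ F u)
  map_one' := by ext x; simp
  map_mul' u v := by ext x; simp [mul_smul]

/-- The group `F_q⁺ ⋊ F_q^×`: pairs `(a, α)` with multiplication
`(a, α)(b, β) = (a + α·b, α·β)`. -/
abbrev Gq (F : Type*) [Field F] : Type _ :=
  SemidirectProduct (Multiplicative F) Fˣ (fieldAct F)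

/-- An element `(a, α)` of `F_q⁺ ⋊ F_q^×`. -/
abbrev Gq.mk {F : Type*} [Field F] (a : F) (α : Fˣ) : Gq F :=
  ⟨Multiplicative.ofAdd a, α⟩

def gqEquiv (F : Type*) [Field F] : Gq F ≃ (Multiplicative F × Fˣ) where
  toFun g := (g.left, g.right)
  invFun p := ⟨p.1, p.2⟩
  left_inv _ := rfl
  right_inv _ := rfl

instance (F : Type*) [Field F] [Fintype F] [DecidableEq F] : Fintype (Gq F) :=
  Fintype.ofEquiv _ (gqEquiv F).symm

instance (F : Type*) [Field F] [DecidableEq F] : DecidableEq (Gq F) :=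
  (gqEquiv F).decidableEq

/-- The carrier of `U = {((a₁, α), (a₂, α⁻¹))} ⊆ G_q × G_q`. -/
def wallSet (F : Type*) [Field F] : Set (Gq F × Gq F) :=
  {g | g.2.right = g.1.right⁻¹}

/-- The 2-cocycle value `φ(g, h) = ω^{tr_p(α·a₂·b₁)}` for
`g = ((a₁, α), (a₂, α⁻¹))` and `h = ((b₁, β), (b₂, β⁻¹))`. -/
noncomputable def wallCocycle (p : ℕ) (F : Type*) [Field F] [Algebra (ZMod p) F] (ω : ℂ) :
    Gq F × Gq F → Gq F × Gq F → ℂ :=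
  fun g h => ω ^ (Algebra.trace (ZMod p) F
    ((g.1.right : F) * Multiplicative.toAdd g.2.left * Multiplicative.toAdd h.1.left)).val

/-!
`U` is the kernel of the homomorphism `(x, y) ↦ α_x · α_y` to `F_q^×`. The cocycle is
`φ = ψ ∘ c`, where `ψ = ω ^ tr_p(·)` is an additive character of `F_q` and
`c(g, h) = α·a₂·b₁` is an additive 2-cocycle on `U`: expanding both sides of the cocycle
identity, they differ by a multiple of `α·α⁻¹ - 1`. An additive character turns additive
cocycles into multiplicative ones.
-/

open Multiplicative AddChar

namespace Gq

variable {F : Type*} [Field F]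

lemma toAdd_mul_left (x y : Gq F) :
    toAdd (x * y).left = toAdd x.left + x.right * toAdd y.left := by
  simp [fieldAct, Units.smul_def]

variable (F) in
def wallSubgroup : Subgroup (Gq F × Gq F) :=
  (mulMonoidHom.comp (SemidirectProduct.rightHom.prodMap SemidirectProduct.rightHom)).ker

lemma mem_wallSubgroup {g : Gq F × Gq F} : g ∈ wallSubgroup F ↔ g.2.right = g.1.right⁻¹ :=
  mul_eq_one_iff_eq_inv'

variable (F) in
lemma coe_wallSubgroup : (wallSubgroup F : Set (Gq F × Gq F)) = wallSet F :=
  Set.ext fun _ => mem_wallSubgroup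

def wallForm (g h : Gq F × Gq F) : F :=
  g.1.right * toAdd g.2.left * toAdd h.1.left

lemma wallForm_mul_add_wallForm {g : Gq F × Gq F} (hg : g.2.right = g.1.right⁻¹)
    (h m : Gq F × Gq F) :
    wallForm (g * h) m + wallForm g h = wallForm g (h * m) + wallForm h m := by
  have hα : (g.1.right : F) * g.2.right = 1 := by simp [hg]
  simp only [wallForm, Prod.fst_mul, Prod.snd_mul, SemidirectProduct.mul_right,
    toAdd_mul_left, Units.val_mul]
  linear_combination (h.1.right * toAdd h.2.left * toAdd m.1.left : F) * hα

end Gq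

noncomputable def traceChar (p : ℕ) [NeZero p] (S : Type*) [CommRing S] [Algebra (ZMod p) S]
    {C : Type*} [CommMonoid C] {ζ : C} (hζ : ζ ^ p = 1) : AddChar S C :=
  (zmodChar p hζ).compAddMonoidHom (Algebra.trace (ZMod p) S).toAddMonoidHom

open Gq in
lemma wallCocycle_eq_traceChar_wallForm {p : ℕ} [NeZero p] {F : Type*} [Field F]
    [Algebra (ZMod p) F] {ω : ℂ} (hω : ω ^ p = 1) (g h : Gq F × Gq F) :
    wallCocycle p F ω g h = traceChar p F hω (wallForm g h) :=
  rfl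

theorem wallSet_subgroup_and_cocycle_general (p : ℕ) [Fact p.Prime] (F : Type*) [Field F]
    [Algebra (ZMod p) F] (ω : ℂ)
    (hω : IsPrimitiveRoot ω p) :
    ∃ U : Subgroup (Gq F × Gq F), (U : Set (Gq F × Gq F)) = wallSet F ∧
      ∀ g h m : Gq F × Gq F, g ∈ U → h ∈ U → m ∈ U →
        wallCocycle p F ω (g * h) m * wallCocycle p F ω g h
          = wallCocycle p F ω g (h * m) * wallCocycle p F ω h m := by
  refine ⟨Gq.wallSubgroup F, Gq.coe_wallSubgroup F, fun g h m hg _ _ => ?_⟩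
  simp only [wallCocycle_eq_traceChar_wallForm hω.pow_eq_one, ← map_add_eq_mul,
    Gq.wallForm_mul_add_wallForm (Gq.mem_wallSubgroup.mp hg)]

/-- `U` is a subgroup of `G_q × G_q` and `φ(g,h) = ω^{tr_p(α·a₂·b₁)}` is a 2-cocycle
on it. -/
theorem wallSet_subgroup_and_cocycle (p : ℕ) [Fact p.Prime] (F : Type*) [Field F]
    [Fintype F] [DecidableEq F] [Algebra (ZMod p) F] (ω : ℂ)
    (hω : IsPrimitiveRoot ω p) :
    ∃ U : Subgroup (Gq F × Gq F), (U : Set (Gq F × Gq F)) = wallSet F ∧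
      ∀ g h m : Gq F × Gq F, g ∈ U → h ∈ U → m ∈ U →
        wallCocycle p F ω (g * h) m * wallCocycle p F ω g h
          = wallCocycle p F ω g (h * m) * wallCocycle p F ω h m :=
  wallSet_subgroup_and_cocycle_general p F ω hω
end

section
/- Let G be a finite group and a ∈ G with a ≠ e such that the centralizer of a equals the union of the identity and the conjugacy class of a, i.e., Z(a) = {e} ∪ ā. Then Z(a) is an abelian normal subgroup of G, all of its non-identity elements have the same order, and Z(a) is an elementary abelian p-group for some prime p; in particular |Z(a)| is a power of a prime. -/
private lemma elemAbelianAux {H : Type*} [CommGroup H] [Finite H] {p : ℕ} (hp : p.Prime)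
    (hpow : ∀ x : H, x ^ p = 1) (hnt : ∃ x : H, x ≠ 1) :
    ∃ n, 1 ≤ n ∧ Nonempty (H ≃* Multiplicative (Fin n → ZMod p)) ∧ Nat.card H = p ^ n := by
  haveI hf : Fact p.Prime := ⟨hp⟩
  haveI hnz : NeZero p := ⟨hp.ne_zero⟩
  obtain ⟨x0, hx0⟩ := hnt
  haveI hnt' : Nontrivial H := ⟨x0, 1, hx0⟩
  letI mod : Module (ZMod p) (Additive H) := AddCommGroup.zmodModule (by
    intro x
    rw [← ofMul_toMul x, ← ofMul_pow, hpow, ofMul_one])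
  haveI m1 : Module (ZMod p) (Additive H) := inferInstance
  haveI mfin : Module.Finite (ZMod p) (Additive H) := inferInstance
  have b := Module.finBasis (ZMod p) (Additive H)
  set n := Module.finrank (ZMod p) (Additive H) with hn
  have e : H ≃* Multiplicative (Fin n → ZMod p) :=
    (MulEquiv.multiplicativeAdditive H).symm.trans
      (AddEquiv.toMultiplicative b.equivFun.toAddEquiv)
  refine ⟨n, ?_, ⟨e⟩, ?_⟩
  · exact Module.finrank_pos (R := ZMod p) (M := Additive H)
  · rw [Nat.card_congr e.toEquiv]
    simp [Nat.card_fun, Nat.card_zmod]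

/-- If in a finite group `G` the centralizer of `a ≠ e` equals `{e} ∪ ā`, then `Z(a)` is
an abelian normal subgroup, all of its non-identity elements have the same order, and it
is an elementary abelian `p`-group; in particular `|Z(a)|` is a prime power. -/
theorem centralizer_eq_one_union_conjClass (G : Type*) [Group G] [Finite G]
    (a : G) (ha : a ≠ 1)
    (hZ : (Subgroup.centralizer {a} : Set G) = {1} ∪ conjugatesOf a) :
    (Subgroup.centralizer ({a} : Set G)).Normal ∧
    (∀ x ∈ Subgroup.centralizer ({a} : Set G), ∀ y ∈ Subgroup.centralizer ({a} : Set G),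
      x * y = y * x) ∧
    (∀ x ∈ Subgroup.centralizer ({a} : Set G), ∀ y ∈ Subgroup.centralizer ({a} : Set G),
      x ≠ 1 → y ≠ 1 → orderOf x = orderOf y) ∧
    (∃ (p n : ℕ), p.Prime ∧ 1 ≤ n ∧
      Nonempty ((Subgroup.centralizer ({a} : Set G)) ≃* Multiplicative (Fin n → ZMod p)) ∧
      Nat.card (Subgroup.centralizer ({a} : Set G)) = p ^ n) := by
  set Z := Subgroup.centralizer ({a} : Set G) with hZdef
  have hmem : ∀ x : G, x ∈ Z ↔ x = 1 ∨ IsConj a x := by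
    intro x
    rw [← SetLike.mem_coe, hZ, Set.mem_union, Set.mem_singleton_iff]
    exact Iff.rfl
  have haZ : a ∈ Z := Subgroup.mem_centralizer_singleton_iff.mpr rfl
  -- commutativity
  have hcomm : ∀ x ∈ Z, ∀ y ∈ Z, x * y = y * x := by
    intro x hx y hy
    rcases (hmem x).1 hx with rfl | hxc
    · simp
    rcases (hmem y).1 hy with rfl | hyc
    · simp
    obtain ⟨c, hc⟩ := isConj_iff.1 hxc
    have h1 : IsConj a (c⁻¹ * y * c) := hyc.trans (isConj_iff.2 ⟨c⁻¹, by group⟩)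
    have h2 : (c⁻¹ * y * c) ∈ Z := (hmem _).2 (Or.inr h1)
    have h3 : (c⁻¹ * y * c) * a = a * (c⁻¹ * y * c) :=
      Subgroup.mem_centralizer_singleton_iff.1 h2
    subst hc
    rw [show c * a * c⁻¹ * y = c * (a * (c⁻¹ * y * c)) * c⁻¹ by group, ← h3]
    group
  -- orders
  have hord : ∀ x ∈ Z, x ≠ 1 → orderOf x = orderOf a := by
    intro x hx hx1
    rcases (hmem x).1 hx with rfl | h
    · exact absurd rfl hx1
    · obtain ⟨c, hc⟩ := h
      exact (SemiconjBy.orderOf_eq _ hc).symm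
  -- orderOf a is prime
  set p := orderOf a with hp
  have hpne1 : p ≠ 1 := fun h => ha (orderOf_eq_one_iff.1 h)
  have hppos : 0 < p := orderOf_pos a
  obtain ⟨q, hq, hqd⟩ := Nat.exists_prime_and_dvd hpne1
  have hbZ : a ^ (p / q) ∈ Z :=
    Subgroup.mem_centralizer_singleton_iff.2 (((Commute.refl a).pow_left _))
  have hbord : orderOf (a ^ (p / q)) = q := by
    rw [orderOf_pow, ← hp, Nat.gcd_eq_right (Nat.div_dvd_of_dvd hqd),
      Nat.div_div_self hqd hppos.ne']
  have hb1 : a ^ (p / q) ≠ 1 := by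
    intro h
    rw [h, orderOf_one] at hbord
    exact hq.ne_one hbord.symm
  have hqp : q = p := by rw [← hbord, hord _ hbZ hb1]
  have hpprime : p.Prime := hqp ▸ hq
  -- CommGroup structure on Z
  letI cg : CommGroup Z :=
    { (inferInstance : Group Z) with
      mul_comm := fun x y => Subtype.ext (hcomm x x.2 y y.2) }
  have hpow : ∀ x : Z, x ^ p = 1 := by
    intro x
    by_cases hx1 : (x : G) = 1
    · have : x = 1 := Subtype.ext hx1
      rw [this, one_pow]
    · have := hord (x : G) x.2 hx1
      refine Subtype.ext ?_
      push_cast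
      rw [← this]
      exact pow_orderOf_eq_one _
  have hntZ : ∃ x : Z, x ≠ 1 :=
    ⟨⟨a, haZ⟩, fun h => ha (congrArg Subtype.val h)⟩
  obtain ⟨n, hn1, he, hcard⟩ := elemAbelianAux hpprime hpow hntZ
  refine ⟨?_, hcomm, ?_, p, n, hpprime, hn1, he, hcard⟩
  · refine ⟨fun x hx g => ?_⟩
    rcases (hmem x).1 hx with rfl | h
    · simpa using Z.one_mem
    · exact (hmem _).2 (Or.inr (h.trans (isConj_iff.2 ⟨g, rfl⟩)))
  · intro x hx y hy hx1 hy1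
    rw [hord x hx hx1, hord y hy hy1]
end

section
/- Let H be a finite near-field, that is, a finite set with binary operations + and × and distinguished elements 0 ≠ 1 such that (H, +) is an abelian group with identity 0, 0 × x = x × 0 = 0 for all x ∈ H, (H \ {0}, ×) is a group with identity 1, and x × (y + z) = x × y + x × z for all x, y, z ∈ H. Then |H| is a power of a prime p and the additive group (H, +) is elementary abelian, i.e., isomorphic to (ℤ/pℤ)ⁿ; in particular all nonzero elements of (H, +) have order p. -/
/-- A finite near-field `H` (abelian additive group; `0·x = x·0 = 0`; the nonzero
elements form a group under multiplication with identity `1`; multiplication is left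
distributive over addition) has prime-power cardinality, its additive group is
elementary abelian, and every nonzero element has additive order `p`. -/
theorem nearfield_addGroup_elementary_abelian (H : Type*) [Fintype H]
    [AddCommGroup H] [Mul H] [One H]
    (h01 : (0 : H) ≠ 1)
    (hzero_mul : ∀ x : H, 0 * x = 0) (hmul_zero : ∀ x : H, x * 0 = 0)
    (hmul_ne : ∀ x y : H, x ≠ 0 → y ≠ 0 → x * y ≠ 0)
    (hmul_assoc : ∀ x y z : H, x ≠ 0 → y ≠ 0 → z ≠ 0 → x * y * z = x * (y * z))
    (hone_mul : ∀ x : H, x ≠ 0 → 1 * x = x) (hmul_one : ∀ x : H, x ≠ 0 → x * 1 = x)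
    (hinv : ∀ x : H, x ≠ 0 → ∃ y : H, y ≠ 0 ∧ x * y = 1 ∧ y * x = 1)
    (hdistrib : ∀ x y z : H, x * (y + z) = x * y + x * z) :
    ∃ p n : ℕ, p.Prime ∧ Fintype.card H = p ^ n ∧
      (∀ x : H, x ≠ 0 → addOrderOf x = p) ∧
      Nonempty (H ≃+ (Fin n → ZMod p)) := by
  classical
  set p := addOrderOf (1 : H) with hp
  -- every nonzero element has additive order p
  have key : ∀ x : H, x ≠ 0 → addOrderOf x = p := by
    intro x hx
    obtain ⟨y, hy, -, hyx⟩ := hinv x hx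
    let f : H →+ H := AddMonoidHom.mk' (fun z => x * z) (hdistrib x)
    let g : H →+ H := AddMonoidHom.mk' (fun z => y * z) (hdistrib y)
    have h1 : addOrderOf x ∣ p := by
      have := addOrderOf_map_dvd f (1 : H)
      simpa [f, hmul_one x hx] using this
    have h2 : p ∣ addOrderOf x := by
      have := addOrderOf_map_dvd g x
      simpa [g, hyx] using this
    exact Nat.dvd_antisymm h1 h2
  have hone : (1 : H) ≠ 0 := fun h => h01 h.symm
  have hp_pos : 0 < p := by
    rw [hp]
    exact addOrderOf_pos (1 : H)
  have hp1 : p ≠ 1 := by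
    intro h
    exact hone (AddMonoid.addOrderOf_eq_one_iff.mp (hp ▸ h))
  -- p is prime
  have hp_prime : p.Prime := by
    obtain ⟨q, hq, hqd⟩ := Nat.exists_prime_and_dvd hp1
    obtain ⟨m, hm⟩ := hqd
    have hm_pos : 0 < m := by
      rcases Nat.eq_zero_or_pos m with h | h
      · simp [h] at hm; omega
      · exact h
    have hm_lt : m < p := by
      rw [hm]
      calc m = 1 * m := (one_mul m).symm
      _ < q * m := by exact (Nat.mul_lt_mul_right hm_pos).mpr hq.one_lt
    have ha : (m • (1 : H)) ≠ 0 := by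
      intro h
      have := addOrderOf_le_of_nsmul_eq_zero hm_pos h
      omega
    have hqa : q • (m • (1 : H)) = 0 := by
      rw [← mul_nsmul', ← hm]
      exact addOrderOf_nsmul_eq_zero (1 : H)
    have hdvd := addOrderOf_dvd_of_nsmul_eq_zero hqa
    rw [key _ ha] at hdvd
    rcases (Nat.Prime.eq_one_or_self_of_dvd hq p hdvd) with h | h
    · exact absurd h hp1
    · exact h ▸ hq
  haveI : Fact p.Prime := ⟨hp_prime⟩
  -- ZMod p module structure
  have hsmul : ∀ x : H, p • x = 0 := by
    intro x
    rcases eq_or_ne x 0 with rfl | hx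
    · simp
    · rw [← key x hx]; exact addOrderOf_nsmul_eq_zero x
  haveI : Module (ZMod p) H := AddCommGroup.zmodModule hsmul
  set n := Module.finrank (ZMod p) H with hn
  refine ⟨p, n, hp_prime, ?_, key, ?_⟩
  · have := Module.card_eq_pow_finrank (K := ZMod p) (V := H)
    simpa [ZMod.card] using this
  · exact ⟨((Module.finBasis (ZMod p) H).equivFun).toAddEquiv⟩
end
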